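/- Let (Ω, ℱ, ℙ) be a probability space, q ∈ [1,2], c ≥ 0, and let m, A, B be nonnegative random variables such that (1 + m)(A² + m·B²) is integrable. If c^q ≤ E[(1 + m)^(q−1) · (A^q + m · B^q)], then c² ≤ E[(1 + m) · (A² + m · B²)]. -/
import Mathlib


open MeasureTheory

/-- Self-improvement step: if `q ∈ [1,2]`, `c ≥ 0`, and `m, A, B` are nonnegative
random variables with `(1 + m)(A² + m B²)` integrable, then
`c^q ≤ E[(1 + m)^(q-1) (A^q + m B^q)]` implies `c² ≤ E[(1 + m)(A² + m B²)]`. -/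
theorem self_improvement {Ω : Type*} [MeasurableSpace Ω] (ℙ : Measure Ω)
    [IsProbabilityMeasure ℙ] (q c : ℝ) (hq1 : 1 ≤ q) (hq2 : q ≤ 2) (hc : 0 ≤ c)
    (m A B : Ω → ℝ) (hm : Measurable m) (hA : Measurable A) (hB : Measurable B)
    (hmnn : ∀ ω, 0 ≤ m ω) (hAnn : ∀ ω, 0 ≤ A ω) (hBnn : ∀ ω, 0 ≤ B ω)
    (hint : Integrable (fun ω => (1 + m ω) * (A ω ^ (2:ℝ) + m ω * B ω ^ (2:ℝ))) ℙ)
    (hyp : c ^ q ≤ ∫ ω, (1 + m ω) ^ (q - 1) * (A ω ^ q + m ω * B ω ^ q) ∂ℙ) :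
    c ^ (2:ℝ) ≤ ∫ ω, (1 + m ω) * (A ω ^ (2:ℝ) + m ω * B ω ^ (2:ℝ)) ∂ℙ := by
  set s : ℝ := q / 2 with hs
  have hq0 : (0:ℝ) < q := lt_of_lt_of_le one_pos hq1
  have hs0 : (0:ℝ) < s := by positivity
  have hs1 : s ≤ 1 := by rw [hs]; linarith
  set g : Ω → ℝ := fun ω => (1 + m ω) * (A ω ^ (2:ℝ) + m ω * B ω ^ (2:ℝ)) with hgdef
  have hgnn : ∀ ω, 0 ≤ g ω := by
    intro ω
    have := hmnn ω
    have hA2 : (0:ℝ) ≤ A ω ^ (2:ℝ) := Real.rpow_nonneg (hAnn ω) _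
    have hB2 : (0:ℝ) ≤ B ω ^ (2:ℝ) := Real.rpow_nonneg (hBnn ω) _
    positivity
  have hconc : ConcaveOn ℝ (Set.Ici 0) (fun x : ℝ => x ^ s) := Real.concaveOn_rpow hs0.le hs1
  -- pointwise bound
  have hpt : ∀ ω, (1 + m ω) ^ (q - 1) * (A ω ^ q + m ω * B ω ^ q) ≤ g ω ^ s := by
    intro ω
    have hm0 := hmnn ω
    have hw : (0:ℝ) < 1 + m ω := by linarith
    have ha : (0:ℝ) < 1 / (1 + m ω) := by positivity
    have hb : (0:ℝ) ≤ m ω / (1 + m ω) := by positivity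
    have hab : 1 / (1 + m ω) + m ω / (1 + m ω) = 1 := by field_simp
    have hA2 : (A ω ^ (2:ℝ)) ∈ Set.Ici (0:ℝ) := Real.rpow_nonneg (hAnn ω) _
    have hB2 : (B ω ^ (2:ℝ)) ∈ Set.Ici (0:ℝ) := Real.rpow_nonneg (hBnn ω) _
    have key := hconc.2 hA2 hB2 ha.le hb hab
    simp only [smul_eq_mul] at key
    have eA : (A ω ^ (2:ℝ)) ^ s = A ω ^ q := by
      rw [← Real.rpow_mul (hAnn ω)]; congr 1; rw [hs]; ring
    have eB : (B ω ^ (2:ℝ)) ^ s = B ω ^ q := by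
      rw [← Real.rpow_mul (hBnn ω)]; congr 1; rw [hs]; ring
    set X : ℝ := A ω ^ (2:ℝ) + m ω * B ω ^ (2:ℝ) with hX
    have hXnn : 0 ≤ X := by
      have h1 := Set.mem_Ici.mp hA2
      have h2 := Set.mem_Ici.mp hB2
      positivity
    have hcomb : 1 / (1 + m ω) * (A ω ^ (2:ℝ)) + m ω / (1 + m ω) * (B ω ^ (2:ℝ))
        = X / (1 + m ω) := by rw [hX]; field_simp
    rw [eA, eB, hcomb, Real.div_rpow hXnn hw.le] at key
    have key2 : A ω ^ q + m ω * B ω ^ q ≤ (1 + m ω) ^ (1 - s) * X ^ s := by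
      have h1 : A ω ^ q + m ω * B ω ^ q
          = (1 + m ω) * (1 / (1 + m ω) * A ω ^ q + m ω / (1 + m ω) * B ω ^ q) := by
        field_simp
      have h2 : (1 + m ω) * (X ^ s / (1 + m ω) ^ s) = (1 + m ω) ^ (1 - s) * X ^ s := by
        rw [Real.rpow_sub hw, Real.rpow_one]; ring
      rw [h1, ← h2]
      exact mul_le_mul_of_nonneg_left key hw.le
    have hwpow : (0:ℝ) ≤ (1 + m ω) ^ (q - 1) := Real.rpow_nonneg hw.le _
    calc (1 + m ω) ^ (q - 1) * (A ω ^ q + m ω * B ω ^ q)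
        ≤ (1 + m ω) ^ (q - 1) * ((1 + m ω) ^ (1 - s) * X ^ s) :=
          mul_le_mul_of_nonneg_left key2 hwpow
      _ = (1 + m ω) ^ ((q - 1) + (1 - s)) * X ^ s := by
          rw [Real.rpow_add hw]; ring
      _ = (1 + m ω) ^ s * X ^ s := by
          congr 2; rw [hs]; ring
      _ = ((1 + m ω) * X) ^ s := (Real.mul_rpow hw.le hXnn).symm
      _ = g ω ^ s := rfl
  -- measurability / integrability
  have hrpow2 : Measurable (fun x : ℝ => x ^ (2:ℝ)) :=
    (Real.continuous_rpow_const (by norm_num)).measurable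
  have hrpows : Measurable (fun x : ℝ => x ^ s) :=
    (Real.continuous_rpow_const hs0.le).measurable
  have hmeasg : Measurable g :=
    (measurable_const.add hm).mul ((hrpow2.comp hA).add (hm.mul (hrpow2.comp hB)))
  have hgs_int : Integrable (fun ω => g ω ^ s) ℙ := by
    have hbd : Integrable (fun ω => 1 + g ω) ℙ := (integrable_const 1).add hint
    refine Integrable.mono hbd (hrpows.comp hmeasg).aestronglyMeasurable ?_
    refine Filter.Eventually.of_forall fun ω => ?_
    have h0 := hgnn ω
    have h1 : g ω ^ s ≤ 1 + g ω := by
      rcases le_total (g ω) 1 with h | h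
      · have := Real.rpow_le_one h0 h hs0.le
        linarith
      · have := Real.rpow_le_rpow_of_exponent_le h hs1
        rw [Real.rpow_one] at this
        linarith
    rw [Real.norm_eq_abs, Real.norm_eq_abs, abs_of_nonneg (Real.rpow_nonneg h0 _),
      abs_of_nonneg (by linarith : (0:ℝ) ≤ 1 + g ω)]
    exact h1
  -- Jensen
  have hcont : ContinuousOn (fun x : ℝ => x ^ s) (Set.Ici 0) := fun x _ =>
    (Real.continuousAt_rpow_const x s (Or.inr hs0.le)).continuousWithinAt
  have hJ : (∫ ω, g ω ^ s ∂ℙ) ≤ (∫ ω, g ω ∂ℙ) ^ s :=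
    hconc.le_map_integral hcont isClosed_Ici
      (Filter.Eventually.of_forall fun ω => Set.mem_Ici.mpr (hgnn ω)) hint hgs_int
  have hmono : (∫ ω, (1 + m ω) ^ (q - 1) * (A ω ^ q + m ω * B ω ^ q) ∂ℙ)
      ≤ ∫ ω, g ω ^ s ∂ℙ := by
    refine integral_mono_of_nonneg ?_ hgs_int (Filter.Eventually.of_forall hpt)
    refine Filter.Eventually.of_forall fun ω => ?_
    have h1 : (0:ℝ) ≤ (1 + m ω) ^ (q - 1) := Real.rpow_nonneg (by linarith [hmnn ω]) _
    have h2 : (0:ℝ) ≤ A ω ^ q := Real.rpow_nonneg (hAnn ω) _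
    have h3 : (0:ℝ) ≤ B ω ^ q := Real.rpow_nonneg (hBnn ω) _
    have := hmnn ω
    positivity
  set I : ℝ := ∫ ω, g ω ∂ℙ with hI
  have hInn : 0 ≤ I := integral_nonneg hgnn
  have hcqI : c ^ q ≤ I ^ s := le_trans hyp (le_trans hmono hJ)
  have hfinal : (c ^ q) ^ ((2:ℝ) / q) ≤ (I ^ s) ^ ((2:ℝ) / q) :=
    Real.rpow_le_rpow (Real.rpow_nonneg hc _) hcqI (by positivity)
  rw [← Real.rpow_mul hc, ← Real.rpow_mul hInn] at hfinal
  have e1 : q * ((2:ℝ) / q) = 2 := by field_simp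
  have e2 : s * ((2:ℝ) / q) = 1 := by rw [hs]; field_simp
  rw [e1, e2, Real.rpow_one] at hfinal
  exact hfinal
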